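/- Let n be a positive integer and z₁,…,zₙ integers with z₁ + … + zₙ = 1. For θ ∈ ℝ let k(θ) be the diagonal n×n complex matrix with entries e^{i·n·z₁·θ}, …, e^{i·n·zₙ·θ}. Then: (i) k(θ) is unitary for every θ; (ii) if k(θ) has determinant 1 (i.e., lies in SU(n)) then k(θ) is the identity matrix; and (iii) every unitary n×n matrix u can be written as u = g·k(θ) for some g ∈ SU(n) and some θ ∈ ℝ. Hence K = {k(θ) : θ ∈ ℝ} is a complement of SU(n) in U(n). -/

import Mathlib

/-!
Since `z₁ + ⋯ + zₙ = 1`, the homomorphism `s : S¹ → U(n)`, `c ↦ diag(c ^ z₁, …, c ^ zₙ)`, is a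
section of `det : U(n) → S¹`, and `k(θ) = s(e^{i n θ})` where `e^{i n θ}` sweeps out the whole
circle. A section of `det` meets `SU(n)` only in `s 1 = 1`, and `u = (u · s(det u)⁻¹) · s(det u)`
factors any unitary `u`.
-/

theorem Finset.prod_zpow_eq_zpow_sum {G ι : Type*} [CommGroup G] (s : Finset ι) (z : ι → ℤ)
    (c : G) : ∏ i ∈ s, c ^ z i = c ^ ∑ i ∈ s, z i := by
  induction s using Finset.cons_induction with
  | empty => simp
  | cons a s ha ih => rw [prod_cons, sum_cons, ih, zpow_add]

theorem Circle.coe_mem_unitary (c : Circle) : (c : ℂ) ∈ unitary ℂ := by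
  rw [Unitary.mem_iff_star_mul_self, Complex.star_def, ← coe_inv_eq_conj, ← coe_mul,
    inv_mul_cancel, coe_one]

theorem Circle.exists_coe_exp_eq_of_mem_unitary {x : ℂ} (hx : x ∈ unitary ℂ) :
    ∃ t : ℝ, (Circle.exp t : ℂ) = x := by
  obtain ⟨t, ht⟩ :=
    Circle.exp_surjective ⟨x, mem_sphere_zero_iff_norm.2 (CStarRing.norm_of_mem_unitary hx)⟩
  exact ⟨t, congrArg Subtype.val ht⟩

open Matrix

section

variable {ι : Type*} [DecidableEq ι]

theorem Matrix.diagonal_mem_unitaryGroup [Fintype ι] {R : Type*} [CommRing R] [StarRing R]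
    {d : ι → R} (hd : ∀ i, d i ∈ unitary R) : diagonal d ∈ unitaryGroup ι R := by
  rw [mem_unitaryGroup_iff, star_eq_conjTranspose, diagonal_conjTranspose, diagonal_mul_diagonal,
    ← diagonal_one]
  exact congrArg diagonal (funext fun i => Unitary.mul_star_self_of_mem (hd i))

theorem Matrix.mul_star_mem_specialUnitaryGroup [Fintype ι] {R : Type*} [CommRing R] [StarRing R]
    {u k : Matrix ι ι R} (hu : u ∈ unitaryGroup ι R) (hk : k ∈ unitaryGroup ι R)
    (hdet : u.det = k.det) : u * star k ∈ specialUnitaryGroup ι R := by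
  refine mem_specialUnitaryGroup_iff.2 ⟨mul_mem hu (Unitary.star_mem hk), ?_⟩
  rw [det_mul, hdet, star_eq_conjTranspose, det_conjTranspose]
  exact Unitary.mul_star_self_of_mem (det_of_mem_unitary hk)

namespace Circle

noncomputable def diagonalZPow (z : ι → ℤ) (c : Circle) : Matrix ι ι ℂ :=
  diagonal fun i => ((c ^ z i : Circle) : ℂ)

theorem diagonalZPow_mem_unitaryGroup [Fintype ι] (z : ι → ℤ) (c : Circle) :
    diagonalZPow z c ∈ unitaryGroup ι ℂ :=
  diagonal_mem_unitaryGroup fun _ => coe_mem_unitary _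

theorem det_diagonalZPow [Fintype ι] (z : ι → ℤ) (c : Circle) :
    (diagonalZPow z c).det = ((c ^ ∑ i, z i : Circle) : ℂ) := by
  rw [diagonalZPow, det_diagonal, ← Finset.prod_zpow_eq_zpow_sum]
  exact (map_prod coeHom (fun i => c ^ z i) _).symm

theorem diagonalZPow_one (z : ι → ℤ) : diagonalZPow z (1 : Circle) = 1 := by
  simp [diagonalZPow]

end Circle

end

/-- **Complements of `SU(n)` in `U(n)` (Section 5.3/5.4).**
Let `z₁,…,zₙ` be integers with `z₁ + ⋯ + zₙ = 1` and for `θ ∈ ℝ` let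
`k(θ) = diag(e^{i n z₁ θ}, …, e^{i n zₙ θ})`.  Then (i) each `k(θ)` is unitary; (ii) if
`k(θ)` has determinant `1` then `k(θ) = 1`; and (iii) every unitary matrix `u` factors as
`u = g · k(θ)` with `g` special unitary.  Hence `K = {k(θ)}` is a complement of `SU(n)`
in `U(n)`. -/
theorem complement_of_SU_in_U (n : ℕ) (hn : 0 < n) (z : Fin n → ℤ) (hz : ∑ i, z i = 1)
    (k : ℝ → Matrix (Fin n) (Fin n) ℂ)
    (hk : ∀ θ : ℝ, k θ =
      Matrix.diagonal fun i => Complex.exp (Complex.I * n * (z i : ℂ) * (θ : ℂ))) :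
    (∀ θ : ℝ, k θ ∈ Matrix.unitaryGroup (Fin n) ℂ) ∧
    (∀ θ : ℝ, (k θ).det = 1 → k θ = 1) ∧
    (∀ u ∈ Matrix.unitaryGroup (Fin n) ℂ,
      ∃ g ∈ Matrix.specialUnitaryGroup (Fin n) ℂ, ∃ θ : ℝ, u = g * k θ) := by
  have hk_eq : ∀ θ : ℝ, k θ = Circle.diagonalZPow z (Circle.exp (n * θ)) := fun θ => by
    rw [hk, Circle.diagonalZPow]
    congr 1
    funext i
    rw [← Circle.exp_intCast_mul, Circle.coe_exp]
    congr 1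
    push_cast
    ring
  have hk_unitary : ∀ θ : ℝ, k θ ∈ unitaryGroup (Fin n) ℂ := fun θ =>
    hk_eq θ ▸ Circle.diagonalZPow_mem_unitaryGroup z _
  have hk_det : ∀ θ : ℝ, (k θ).det = Circle.exp (n * θ) := fun θ => by
    rw [hk_eq, Circle.det_diagonalZPow, hz, zpow_one]
  refine ⟨hk_unitary, fun θ h => ?_, fun u hu => ?_⟩
  · rw [hk_det, Circle.coe_eq_one] at h
    rw [hk_eq, h, Circle.diagonalZPow_one]
  · obtain ⟨t, ht⟩ := Circle.exists_coe_exp_eq_of_mem_unitary (det_of_mem_unitary hu)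
    have hdet : u.det = (k (t / n)).det := by
      rw [hk_det, ← ht, mul_div_cancel₀ t (Nat.cast_ne_zero.2 hn.ne')]
    refine ⟨u * star (k (t / n)), mul_star_mem_specialUnitaryGroup hu (hk_unitary _) hdet,
      t / n, ?_⟩
    rw [mul_assoc, Unitary.star_mul_self_of_mem (hk_unitary _), mul_one]
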